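/- Non-monotonicity of sum without passability: over atom poset A = {a} (a single atom) and B = {⊥,⊤}, let G = [a], G' = ⟨[a]|[a]⟩, and H = ⟨[⊥]|[⊤]⟩. Then G ≡ G' (G ≤ G' and G' ≤ G), but G + H and G' + H are not equivalent: neither G' + H ≤ G + H nor G + H ≤ G' + H holds. -/
import Mathlib


inductive Game (A : Type) : Type 1 where
  | atom : A → Game A
  | comp : (ι κ : Type) → (ι → Game A) → (κ → Game A) → Nonempty ι → Nonempty κ → Game A

namespace Game

variable {A : Type}

/-- `G.IsAtom` holds iff `G` is an atomic game. -/
def IsAtom : Game A → Prop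
  | atom _ => True
  | comp _ _ _ _ _ _ => False

/-- `G.IsLeftOption x`: `x` is a left option of `G`. -/
def IsLeftOption : Game A → Game A → Prop
  | atom _, _ => False
  | comp _ _ L _ _ _, x => ∃ i, L i = x

/-- `G.IsRightOption y`: `y` is a right option of `G`. -/
def IsRightOption : Game A → Game A → Prop
  | atom _, _ => False
  | comp _ _ _ R _ _, x => ∃ j, R j = x

section Ord

variable [PartialOrder A]

mutual
  /-- The order relation `G ≤ H` on games over a poset. -/
  inductive Le : Game A → Game A → Prop
    | mk : ∀ {G H : Game A},
        (∀ x, G.IsLeftOption x → Tri x H) →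
        (∀ y, H.IsRightOption y → Tri G y) →
        ((G.IsAtom ∨ H.IsAtom) → Tri G H) →
        Le G H
  /-- The relation `G ◁ H` on games over a poset. -/
  inductive Tri : Game A → Game A → Prop
    | ofRight : ∀ {G H y : Game A}, G.IsRightOption y → Le y H → Tri G H
    | ofLeft : ∀ {G H x : Game A}, H.IsLeftOption x → Le G x → Tri G H
    | ofAtom : ∀ {a b : A}, a ≤ b → Tri (Game.atom a) (Game.atom b)
end

/-- Equivalence of games: `G ≤ H` and `H ≤ G`. -/
def Equiv (G H : Game A) : Prop := Le G H ∧ Le H G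

/-- A game is monotone if all of its options are good, and recursively all
options are monotone. -/
inductive Monotone : Game A → Prop
  | mk : ∀ {G : Game A},
      (∀ x, G.IsLeftOption x → Le G x) →
      (∀ y, G.IsRightOption y → Le y G) →
      (∀ x, G.IsLeftOption x → Monotone x) →
      (∀ y, G.IsRightOption y → Monotone y) →
      Monotone G

/-- A game is passable if `G ◁ G` and recursively all options are passable. -/
inductive Passable : Game A → Prop
  | mk : ∀ {G : Game A}, Tri G G →
      (∀ x, G.IsLeftOption x → Passable x) →
      (∀ y, G.IsRightOption y → Passable y) →
      Passable G

end Ord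

end Game

/-- The sum of a game over `A` and a game over `B`, a game over `A × B`:
`[a] + [b] = [(a,b)]`, and if at least one summand is composite,
`G + H = ⟨G^L + H, G + H^L | G^R + H, G + H^R⟩`. -/
noncomputable def Game.sum {A B : Type} : Game A → Game B → Game (A × B) :=
  fun G =>
    Game.rec (motive := fun _ => Game B → Game (A × B))
      (fun a =>
        Game.rec (motive := fun _ => Game (A × B))
          (fun b => Game.atom (a, b))
          (fun ι κ _ _ hι hκ ihL ihR => Game.comp ι κ ihL ihR hι hκ))
      (fun ι κ _ _ hι hκ ihL ihR H =>
        Game.rec (motive := fun _ => Game (A × B))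
          (fun b =>
            Game.comp ι κ (fun i => ihL i (Game.atom b))
              (fun j => ihR j (Game.atom b)) hι hκ)
          (fun ι' κ' L' R' hι' hκ' ihL' ihR' =>
            Game.comp (ι ⊕ ι') (κ ⊕ κ')
              (Sum.elim (fun i => ihL i (Game.comp ι' κ' L' R' hι' hκ')) ihL')
              (Sum.elim (fun j => ihR j (Game.comp ι' κ' L' R' hι' hκ')) ihR')
              (hι.map Sum.inl) (hκ.map Sum.inl))
          H)
      G


section Aux

private abbrev aG : Game (Unit × Bool) := Game.atom ((), false)
private abbrev bG : Game (Unit × Bool) := Game.atom ((), true)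
private abbrev XG : Game (Unit × Bool) :=
  Game.comp Unit Unit (fun _ => aG) (fun _ => bG) ⟨()⟩ ⟨()⟩

private lemma not_tri_ba : ¬ Game.Tri bG aG := by
  intro h
  cases h with
  | ofRight h _ => exact h
  | ofLeft h _ => exact h
  | ofAtom hab => rw [Prod.le_def] at hab; exact absurd hab.2 (by decide)

private lemma not_le_ba : ¬ Game.Le bG aG := by
  intro h
  cases h with
  | mk hL hR hA => exact not_tri_ba (hA (Or.inl trivial))

private lemma not_le_bX : ¬ Game.Le bG XG := by
  intro h
  cases h with
  | mk hL hR hA =>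
    have t := hA (Or.inl trivial)
    cases t with
    | ofRight h _ => exact h
    | ofLeft h hle =>
      obtain ⟨i, rfl⟩ := h
      exact not_le_ba hle

private lemma not_le_Xa : ¬ Game.Le XG aG := by
  intro h
  cases h with
  | mk hL hR hA =>
    have t := hA (Or.inr trivial)
    cases t with
    | ofRight h hle =>
      obtain ⟨j, rfl⟩ := h
      exact not_le_ba hle
    | ofLeft h _ => exact h

private lemma not_tri_XX : ¬ Game.Tri XG XG := by
  intro h
  cases h with
  | ofRight h hle =>
    obtain ⟨j, rfl⟩ := h
    exact not_le_bX hle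
  | ofLeft h hle =>
    obtain ⟨i, rfl⟩ := h
    exact not_le_Xa hle

private lemma le_atom_atom : Game.Le (Game.atom () : Game Unit) (Game.atom ()) :=
  Game.Le.mk (fun _ h => h.elim) (fun _ h => h.elim) (fun _ => Game.Tri.ofAtom le_rfl)

end Aux

/-- Non-monotonicity of sum without passability: over `A = Unit` (one atom)
and `B = Bool`, with `G = [a]`, `G' = ⟨[a]|[a]⟩` and `H = ⟨[⊥]|[⊤]⟩`, we have
`G ≡ G'` but `G + H` and `G' + H` are incomparable: neither
`G + H ≤ G' + H` nor `G' + H ≤ G + H` holds. -/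
theorem Game.sum_not_monotone :
    let G : Game Unit := Game.atom ()
    let G' : Game Unit :=
      Game.comp Unit Unit (fun _ => Game.atom ()) (fun _ => Game.atom ()) ⟨()⟩ ⟨()⟩
    let H : Game Bool :=
      Game.comp Unit Unit (fun _ => Game.atom false) (fun _ => Game.atom true) ⟨()⟩ ⟨()⟩
    Game.Equiv G G' ∧
      ¬ Game.Le (G.sum H) (G'.sum H) ∧ ¬ Game.Le (G'.sum H) (G.sum H) := by
  refine ⟨⟨?_, ?_⟩, ?_, ?_⟩
  · exact Game.Le.mk (fun _ h => h.elim)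
      (fun y hy => by obtain ⟨j, rfl⟩ := hy; exact Game.Tri.ofAtom le_rfl)
      (fun _ => Game.Tri.ofLeft ⟨(), rfl⟩ le_atom_atom)
  · exact Game.Le.mk
      (fun x hx => by obtain ⟨i, rfl⟩ := hx; exact Game.Tri.ofAtom le_rfl)
      (fun _ h => h.elim)
      (fun _ => Game.Tri.ofRight ⟨(), rfl⟩ le_atom_atom)
  · intro h
    cases h with
    | mk hL hR hA =>
      exact not_tri_XX (hR _ ⟨Sum.inl (), rfl⟩)
  · intro h
    cases h with
    | mk hL hR hA =>
      exact not_tri_XX (hL _ ⟨Sum.inl (), rfl⟩)
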